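/- Let S be a real symmetric positive semidefinite n×n matrix. Then S can be written as Σ_{i=1}^{n} λ_i e_i e_iᵀ where e_1,…,e_n is an orthonormal basis of ℝⁿ and λ_i ≥ 0; moreover for any polynomial P on symmetric matrices that is homogeneous of degree k and vanishes on matrices of rank less than k, P(S) = Σ_{|α|=k, α⊆{1..n}} (multinomial-weighted) values of P on the rank-k matrices Σ_{i∈α} e_i e_iᵀ times ∏_{i∈α} λ_i; in particular, if P is nonnegative on all matrices of the form Σ_{i=1}^{k} v_i v_iᵀ with v_i ∈ ℝⁿ, then P(S) ≥ 0. -/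

import Mathlib

/-!
By the spectral theorem `S = ∑ λᵢ eᵢ eᵢᵀ`, and `R(x) = P (∑ xᵢ eᵢ eᵢᵀ)` is a homogeneous
polynomial of degree `k` in `x`. A sum of fewer than `k` rank-one matrices has rank `< k`, so `R`
vanishes whenever fewer than `k` coordinates of `x` are nonzero. Restricting `R` to coordinate
subspaces shows that its monomials involve at least `k` variables; by homogeneity they are then
the square-free monomials `x^T` with `|T| = k`, whence `R(λ) = ∑_{|T| = k} λ^T R(1_T)`. Finally
each such `T` is the image of exactly `k!` injective `α : Fin k → Fin n`, while a non-injective `α`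
gives `P` of a symmetric matrix of rank `< k`, that is `0`.
-/

open Finset MvPolynomial Matrix Nat

namespace Matrix

variable {ι m n K : Type*} [Field K]

theorem rank_add_le [Fintype n] (A B : Matrix m n K) : (A + B).rank ≤ A.rank + B.rank := by
  refine (Submodule.finrank_mono ?_).trans (Submodule.finrank_add_le_finrank_add_finrank _ _)
  rintro _ ⟨x, rfl⟩
  rw [mulVecLin_add]
  exact Submodule.add_mem_sup (LinearMap.mem_range_self _ x) (LinearMap.mem_range_self _ x)

theorem rank_sum_le [Fintype n] (s : Finset ι) (A : ι → Matrix m n K) :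
    (∑ i ∈ s, A i).rank ≤ ∑ i ∈ s, (A i).rank :=
  le_sum_of_subadditive (fun B : Matrix m n K => B.rank) (by simp) rank_add_le s A

theorem rank_sum_vecMulVec_le [Fintype n] (s : Finset ι) (u : ι → m → K) (v : ι → n → K) :
    (∑ i ∈ s, vecMulVec (u i) (v i)).rank ≤ #s :=
  (rank_sum_le s _).trans <| by
    simpa using sum_le_sum fun i (_ : i ∈ s) => rank_vecMulVec_le (u i) (v i)

theorem isSymm_sum_smul_vecMulVec_self (s : Finset ι) (c : ι → K) (v : ι → n → K) :
    (∑ i ∈ s, c i • vecMulVec (v i) (v i)).IsSymm := by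
  simp [IsSymm, transpose_sum]

end Matrix

theorem Matrix.PosSemidef.exists_eq_sum_smul_vecMulVec {n : Type*} [Fintype n] [DecidableEq n]
    {S : Matrix n n ℝ} (hS : S.PosSemidef) :
    ∃ (lam : n → ℝ) (e : n → n → ℝ), (∀ i, 0 ≤ lam i) ∧
      (∀ i j, e i ⬝ᵥ e j = if i = j then 1 else 0) ∧
      S = ∑ i, lam i • vecMulVec (e i) (e i) := by
  have hH : S.IsHermitian := hS.isHermitian
  refine ⟨hH.eigenvalues, fun i => hH.eigenvectorBasis i, hS.eigenvalues_nonneg,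
    fun i j => ?_, ?_⟩
  · simpa [dotProduct, PiLp.inner_apply, mul_comm] using
      orthonormal_iff_ite.mp hH.eigenvectorBasis.orthonormal i j
  · ext p q
    conv_lhs => rw [hH.spectral_theorem]
    simp only [Unitary.conjStarAlgAut_apply, mul_apply, diagonal_apply, star_apply, star_trivial,
      Function.comp_apply, RCLike.ofReal_real_eq_id, id_eq, mul_ite, mul_zero, sum_ite_eq',
      mem_univ, if_true, sum_apply, smul_apply, smul_eq_mul, vecMulVec_apply,
      IsHermitian.eigenvectorUnitary_apply]
    exact sum_congr rfl fun i _ => by ring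

namespace MvPolynomial

variable {σ R : Type*}

theorem coeff_bind₁_ite_X [CommSemiring R] [DecidableEq σ] (T : Finset σ)
    (p : MvPolynomial σ R) (d : σ →₀ ℕ) :
    coeff d (bind₁ (fun i => if i ∈ T then X i else 0) p) =
      if d.support ⊆ T then coeff d p else 0 := by
  induction p using MvPolynomial.induction_on' with
  | monomial u c =>
    rw [bind₁_monomial]
    by_cases hu : u.support ⊆ T
    · rw [prod_congr rfl fun i hi => by rw [if_pos (hu hi)], ← Finsupp.prod, ← monomial_eq,
        coeff_monomial]
      by_cases h : u = d
      · subst h; simp [hu]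
      · simp [h]
    · obtain ⟨i, hi, hiT⟩ := not_subset.mp hu
      rw [prod_eq_zero hi (by simp [hiT, Finsupp.mem_support_iff.mp hi]), mul_zero,
        coeff_zero, coeff_monomial]
      by_cases h : u = d
      · subst h; simp [hu]
      · simp [h]
  | add p q hp hq => simp only [map_add, coeff_add, hp, hq]; split_ifs <;> simp

variable [CommRing R] [IsDomain R] [Infinite R] {k : ℕ} {p : MvPolynomial σ R}

theorem coeff_eq_zero_of_card_support_lt [DecidableEq σ]
    (hp : ∀ (T : Finset σ) (x : σ → R), #T < k → (∀ i ∉ T, x i = 0) → eval x p = 0)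
    {d : σ →₀ ℕ} (hd : #d.support < k) : coeff d p = 0 := by
  have hrestrict : bind₁ (fun i => if i ∈ d.support then X i else 0) p = 0 :=
    funext fun x => by
      rw [eval, eval₂Hom_bind₁, map_zero]
      exact hp d.support _ hd fun i hi => by simp [hi]
  have := coeff_bind₁_ite_X d.support p d
  rwa [hrestrict, coeff_zero, if_pos subset_rfl, eq_comm] at this

theorem IsHomogeneous.card_support_eq_and_apply_eq_one (hhom : p.IsHomogeneous k)
    (hp : ∀ (T : Finset σ) (x : σ → R), #T < k → (∀ i ∉ T, x i = 0) → eval x p = 0)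
    {d : σ →₀ ℕ} (hd : d ∈ p.support) :
    #d.support = k ∧ ∀ i ∈ d.support, d i = 1 := by
  classical
  have hdeg : ∑ i ∈ d.support, d i = k := by
    simpa [Finsupp.weight_apply, Finsupp.sum] using hhom (mem_support_iff.mp hd)
  have hle : ∀ i ∈ d.support, 1 ≤ d i := fun i hi =>
    Nat.one_le_iff_ne_zero.mpr (Finsupp.mem_support_iff.mp hi)
  have hcard : #d.support = k := by
    refine le_antisymm (by simpa [hdeg] using sum_le_sum hle) (not_lt.mp fun h => ?_)
    exact mem_support_iff.mp hd (coeff_eq_zero_of_card_support_lt hp h)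
  refine ⟨hcard, fun i hi => ((sum_eq_sum_iff_of_le hle).mp ?_ i hi).symm⟩
  simp [hdeg, hcard]

theorem IsHomogeneous.eval_eq_sum_powersetCard [Fintype σ] [DecidableEq σ]
    (hhom : p.IsHomogeneous k)
    (hp : ∀ (T : Finset σ) (x : σ → R), #T < k → (∀ i ∉ T, x i = 0) → eval x p = 0)
    (x : σ → R) :
    eval x p = ∑ T ∈ powersetCard k univ,
      (∏ i ∈ T, x i) * eval (fun i => if i ∈ T then 1 else 0) p := by
  have hsquarefree : ∀ y : σ → R,
      eval y p = ∑ d ∈ p.support, coeff d p * ∏ i ∈ d.support, y i := fun y => by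
    rw [eval_eq]
    refine sum_congr rfl fun d hd => congrArg _ (prod_congr rfl fun i hi => ?_)
    rw [(hhom.card_support_eq_and_apply_eq_one hp hd).2 i hi, pow_one]
  calc eval x p = ∑ d ∈ p.support, coeff d p * ∏ i ∈ d.support, x i := hsquarefree x
    _ = ∑ d ∈ p.support, ∑ T ∈ powersetCard k univ,
          if d.support ⊆ T then coeff d p * ∏ i ∈ T, x i else 0 := by
      refine sum_congr rfl fun d hd => ?_
      have hcard := (hhom.card_support_eq_and_apply_eq_one hp hd).1
      rw [sum_eq_single_of_mem d.support (mem_powersetCard.2 ⟨subset_univ _, hcard⟩),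
        if_pos subset_rfl]
      intro T hT hne
      exact if_neg fun hsub => hne
        (eq_of_subset_of_card_le hsub (by rw [(mem_powersetCard.1 hT).2, hcard])).symm
    _ = _ := by
      rw [sum_comm]
      refine sum_congr rfl fun T _ => ?_
      rw [hsquarefree, mul_sum]
      refine sum_congr rfl fun d _ => ?_
      rw [prod_boole]
      by_cases h : d.support ⊆ T
      · rw [if_pos h, if_pos (c := ∀ i ∈ d.support, i ∈ T) h, mul_one, mul_comm]
      · rw [if_neg h, if_neg (c := ∀ i ∈ d.support, i ∈ T) h, mul_zero, mul_zero]

end MvPolynomial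

namespace Finset

variable {ι : Type*} [DecidableEq ι]

theorem injective_iff_card_image_univ {κ : Type*} [Fintype κ] {α : κ → ι} :
    Function.Injective α ↔ #(univ.image α) = Fintype.card κ := by
  rw [← card_univ, card_image_iff, coe_univ, Set.injOn_univ]

variable [Fintype ι] {k : ℕ}

theorem card_filter_image_eq_factorial {T : Finset ι} (hT : #T = k) :
    #{α : Fin k → ι | univ.image α = T} = k ! := by
  rw [← Fintype.card_subtype]
  have hbij : ∀ α : {α : Fin k → ι // univ.image α = T},
      Function.Bijective fun i => (⟨α.1 i, α.2.subset (mem_image_of_mem _ (mem_univ i))⟩ : T) := by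
    intro α
    refine (Fintype.bijective_iff_surjective_and_card _).2 ⟨?_, by simp [hT]⟩
    rintro ⟨t, ht⟩
    obtain ⟨i, -, rfl⟩ := mem_image.mp (α.2.symm.subset ht)
    exact ⟨i, rfl⟩
  let e : {α : Fin k → ι // univ.image α = T} ≃ (Fin k ≃ T) :=
    { toFun := fun α => Equiv.ofBijective _ (hbij α)
      invFun := fun β => ⟨fun i => β i, by
        ext t
        simpa using ⟨fun ⟨i, hi⟩ => hi ▸ (β i).2, fun ht => ⟨β.symm ⟨t, ht⟩, by simp⟩⟩⟩
      left_inv := fun _ => rfl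
      right_inv := fun _ => Equiv.ext fun _ => rfl }
  rw [Fintype.card_congr e, Fintype.card_equiv (T.equivFinOfCardEq hT).symm, Fintype.card_fin]

theorem sum_fin_pi_eq_factorial_nsmul_sum_powersetCard {M : Type*} [AddCommMonoid M]
    (f : (Fin k → ι) → M) (g : Finset ι → M) (hf₀ : ∀ α, ¬ Function.Injective α → f α = 0)
    (hf : ∀ α, Function.Injective α → f α = g (univ.image α)) :
    ∑ α, f α = k ! • ∑ T ∈ powersetCard k univ, g T := by
  have hinj : ∀ α : Fin k → ι, Function.Injective α ↔ #(univ.image α) = k := fun α => by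
    rw [injective_iff_card_image_univ, Fintype.card_fin]
  rw [← sum_fiberwise univ (fun α => univ.image α) f, smul_sum]
  refine (sum_subset (subset_univ _) fun T _ hT => sum_eq_zero fun α hα => hf₀ α ?_).symm.trans
    (sum_congr rfl fun T hT => ?_)
  · rw [hinj, (mem_filter.mp hα).2]
    simpa using hT
  · have hT : #T = k := (mem_powersetCard.mp hT).2
    have hfiber : ∀ α ∈ ({α | univ.image α = T} : Finset (Fin k → ι)), f α = g T := fun α hα => by
      rw [← (mem_filter.mp hα).2]
      exact hf α ((hinj α).2 ((mem_filter.mp hα).2 ▸ hT))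
    rw [sum_congr rfl hfiber, sum_const, card_filter_image_eq_factorial hT]

end Finset

section Expansion

variable {m ι K : Type*} [Fintype ι] [Field K] {k : ℕ} {P : Matrix m m K → K}

theorem exists_isHomogeneous_eval_eq_apply_sum_smul
    (hpoly : ∃ Q : MvPolynomial (m × m) K, Q.IsHomogeneous k ∧
      ∀ A : Matrix m m K, P A = eval (fun p => A p.1 p.2) Q)
    (M : ι → Matrix m m K) :
    ∃ R : MvPolynomial ι K, R.IsHomogeneous k ∧ ∀ x, eval x R = P (∑ i, x i • M i) := by
  obtain ⟨Q, hQ, hPQ⟩ := hpoly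
  refine ⟨bind₁ (fun p => ∑ i, C (M i p.1 p.2) * X i) Q, ?_, fun x => ?_⟩
  · simpa using hQ.aeval _ fun p =>
      IsHomogeneous.sum _ _ _ fun i _ => isHomogeneous_C_mul_X (M i p.1 p.2) i
  · rw [eval, eval₂Hom_bind₁, hPQ]
    refine congrArg (fun y => eval y Q) (funext fun p => ?_)
    simp [Matrix.sum_apply, mul_comm]

variable [Fintype m]

theorem apply_sum_smul_vecMulVec_eq_zero
    (hvan : ∀ A : Matrix m m K, A.IsSymm → A.rank < k → P A = 0) (v : ι → m → K)
    {T : Finset ι} {x : ι → K} (hT : #T < k) (hx : ∀ i ∉ T, x i = 0) :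
    P (∑ i, x i • vecMulVec (v i) (v i)) = 0 := by
  rw [← sum_subset (subset_univ T) fun i _ hi => by simp [hx i hi]]
  refine hvan _ (isSymm_sum_smul_vecMulVec_self _ _ _) (lt_of_le_of_lt ?_ hT)
  simpa only [smul_vecMulVec] using rank_sum_vecMulVec_le T (fun i => x i • v i) v

variable [DecidableEq ι]

theorem apply_sum_vecMulVec_comp_eq_zero
    (hvan : ∀ A : Matrix m m K, A.IsSymm → A.rank < k → P A = 0) (v : ι → m → K)
    {α : Fin k → ι} (hα : ¬ Function.Injective α) :
    P (∑ i, vecMulVec (v (α i)) (v (α i))) = 0 := by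
  have hfibers : ∑ i, vecMulVec (v (α i)) (v (α i)) =
      ∑ j, (#{i | α i = j} : K) • vecMulVec (v j) (v j) := by
    rw [← sum_fiberwise univ α]
    refine sum_congr rfl fun j _ => ?_
    rw [Nat.cast_smul_eq_nsmul, ← sum_const]
    exact sum_congr rfl fun i hi => by rw [(mem_filter.mp hi).2]
  rw [hfibers]
  refine apply_sum_smul_vecMulVec_eq_zero hvan v (T := univ.image α) ?_ fun j hj => ?_
  · rw [injective_iff_card_image_univ, Fintype.card_fin] at hα
    exact lt_of_le_of_ne (card_image_le.trans (by simp)) hα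
  · rw [Finset.card_eq_zero.mpr (filter_eq_empty_iff.mpr fun i _ hi => ?_), Nat.cast_zero]
    exact hj (hi ▸ mem_image_of_mem α (mem_univ i))

theorem factorial_nsmul_apply_sum_smul_vecMulVec [Infinite K]
    (hpoly : ∃ Q : MvPolynomial (m × m) K, Q.IsHomogeneous k ∧
      ∀ A : Matrix m m K, P A = eval (fun p => A p.1 p.2) Q)
    (hvan : ∀ A : Matrix m m K, A.IsSymm → A.rank < k → P A = 0) (v : ι → m → K) (x : ι → K) :
    k ! • P (∑ i, x i • vecMulVec (v i) (v i)) =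
      ∑ α : Fin k → ι, (∏ i, x (α i)) * P (∑ i, vecMulVec (v (α i)) (v (α i))) := by
  obtain ⟨R, hR, hRP⟩ :=
    exists_isHomogeneous_eval_eq_apply_sum_smul hpoly fun i => vecMulVec (v i) (v i)
  have hRvan : ∀ (T : Finset ι) (y : ι → K), #T < k → (∀ i ∉ T, y i = 0) → eval y R = 0 :=
    fun T y hT hy => (hRP y).trans (apply_sum_smul_vecMulVec_eq_zero hvan v hT hy)
  rw [← hRP, hR.eval_eq_sum_powersetCard hRvan]
  symm
  refine sum_fin_pi_eq_factorial_nsmul_sum_powersetCard _ _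
    (fun α hα => by rw [apply_sum_vecMulVec_comp_eq_zero hvan v hα, mul_zero]) fun α hα => ?_
  rw [prod_image hα.injOn, hRP]
  congr 2
  simp only [ite_smul, one_smul, zero_smul, sum_ite_mem, univ_inter]
  exact (sum_image hα.injOn (f := fun j => vecMulVec (v j) (v j))).symm

end Expansion

/-- A real positive semidefinite matrix `S` has a spectral decomposition
`S = Σ λ_i e_i e_iᵀ` with orthonormal `e_i` and `λ_i ≥ 0`; moreover, for a
polynomial `P` on matrices, homogeneous of degree `k` and vanishing on symmetric
matrices of rank `< k`, `P(S)` expands as the multinomial-weighted sum of values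
of `P` on the rank-`k` matrices built from the eigenvectors; in particular, if
`P` is nonnegative on all sums `Σ_{i=1}^k v_i v_iᵀ`, then `P(S) ≥ 0`. -/
theorem stmt12 (n k : ℕ) (S : Matrix (Fin n) (Fin n) ℝ) (hS : S.PosSemidef)
    (P : Matrix (Fin n) (Fin n) ℝ → ℝ)
    (hpoly : ∃ Q : MvPolynomial (Fin n × Fin n) ℝ, Q.IsHomogeneous k ∧
      ∀ A : Matrix (Fin n) (Fin n) ℝ, P A = MvPolynomial.eval (fun p => A p.1 p.2) Q)
    (hvan : ∀ A : Matrix (Fin n) (Fin n) ℝ, A.IsSymm → A.rank < k → P A = 0) :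
    ∃ (lam : Fin n → ℝ) (e : Fin n → (Fin n → ℝ)),
      (∀ i, 0 ≤ lam i) ∧
      (∀ i, ∑ p : Fin n, e i p * e i p = 1) ∧
      (∀ i j, i ≠ j → ∑ p : Fin n, e i p * e j p = 0) ∧
      S = ∑ i : Fin n, lam i • Matrix.vecMulVec (e i) (e i) ∧
      P S = (1 / (Nat.factorial k : ℝ)) *
        ∑ α : Fin k → Fin n, (∏ i : Fin k, lam (α i)) *
          P (∑ i : Fin k, Matrix.vecMulVec (e (α i)) (e (α i))) ∧
      ((∀ v : Fin k → (Fin n → ℝ), 0 ≤ P (∑ i : Fin k, Matrix.vecMulVec (v i) (v i))) →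
        0 ≤ P S) := by
  obtain ⟨lam, e, hlam, horth, hSe⟩ := hS.exists_eq_sum_smul_vecMulVec
  have hexpand : P S = 1 / (k ! : ℝ) *
      ∑ α : Fin k → Fin n, (∏ i, lam (α i)) * P (∑ i, vecMulVec (e (α i)) (e (α i))) := by
    rw [← factorial_nsmul_apply_sum_smul_vecMulVec hpoly hvan e lam, ← hSe, nsmul_eq_mul,
      ← mul_assoc, one_div_mul_cancel (by positivity), one_mul]
  refine ⟨lam, e, hlam, fun i => by simpa [dotProduct] using horth i i,
    fun i j hij => by simpa [dotProduct, hij] using horth i j, hSe, hexpand, fun hpos => ?_⟩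
  rw [hexpand]
  exact mul_nonneg (by positivity)
    (sum_nonneg fun α _ => mul_nonneg (prod_nonneg fun i _ => hlam (α i)) (hpos _))
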